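/- arXiv:1011.6016 — 2 statements merged into one kernel-verified Lean document; each statement's English description precedes it below -/
import Mathlib

section
/- Let A be a symmetric bilinear form on a 2m-dimensional real inner product space V with orthogonal complex structure J, let u ∈ V be a unit vector, and suppose A ≥ 2·(u♭ ⊗ u♭) + 2c·(g − u♭ ⊗ u♭) as quadratic forms, where g is the inner product, u♭ = ⟨u, ·⟩, and c > 0. Let ε₁ ≤ ⋯ ≤ ε_m be the eigenvalues of the Hermitian form H(Z, W̄) := A(Z, W̄) restricted to (1,0)-vectors (equivalently, ε_i δ_{ij} = (A(e_i,e_j) + A(Je_i,Je_j))/2 for an adapted basis). Then Σ_{i=1}^{m−1} ε_i ≥ 1 + (2m−3)c if c ≥ 1, and Σ_{i=1}^{m−1} ε_i ≥ 2(m−1)c if c < 1. -/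
/-!
Each `ε i = (A(eᵢ, eᵢ) + A(Jeᵢ, Jeᵢ))/2` is bounded below through the unit vectors `eᵢ` and
`Jeᵢ`: it is at least `2c + (1 - c) sᵢ` with `sᵢ = ⟪u, eᵢ⟫² + ⟪u, Jeᵢ⟫²`. Since
`{eᵢ, Jeᵢ}` is orthonormal, Bessel's inequality gives `0 ≤ ∑ sᵢ ≤ ‖u‖² = 1`, so summing over
`i < m - 1` yields `∑ εᵢ ≥ 2(m - 1)c + (1 - c) ∑ sᵢ`; the worst case is `∑ sᵢ = 1` when
`c ≥ 1` and `∑ sᵢ = 0` when `c < 1`.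
-/

open scoped InnerProductSpace

section

variable {V : Type*} [NormedAddCommGroup V] [InnerProductSpace ℝ V]

theorem orthonormal_sumElim_comp_of_inner_map_map {ι : Type*} {e : ι → V}
    (he : Orthonormal ℝ e) (J : V →ₗ[ℝ] V) (hJ : ∀ x y : V, ⟪J x, J y⟫_ℝ = ⟪x, y⟫_ℝ)
    (heJ : ∀ i j, ⟪e i, J (e j)⟫_ℝ = 0) :
    Orthonormal ℝ (Sum.elim e (J ∘ e)) := by
  classical
  rw [orthonormal_iff_ite] at he ⊢
  rintro (i | i) (j | j)
  · simpa using he i j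
  · simpa using heJ i j
  · simpa [real_inner_comm] using heJ j i
  · simpa [hJ] using he i j

theorem sum_inner_sq_add_inner_map_sq_le {ι : Type*} [Fintype ι] {e : ι → V}
    (he : Orthonormal ℝ e) (J : V →ₗ[ℝ] V) (hJ : ∀ x y : V, ⟪J x, J y⟫_ℝ = ⟪x, y⟫_ℝ)
    (heJ : ∀ i j, ⟪e i, J (e j)⟫_ℝ = 0) (u : V) :
    ∑ i, (⟪u, e i⟫_ℝ ^ 2 + ⟪u, J (e i)⟫_ℝ ^ 2) ≤ ‖u‖ ^ 2 := by
  have hbessel := (orthonormal_sumElim_comp_of_inner_map_map he J hJ heJ).sum_inner_products_le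
    (s := Finset.univ) u
  simpa [Fintype.sum_sum_type, Finset.sum_add_distrib, real_inner_comm] using hbessel

theorem two_mul_add_le_apply_self_of_norm_eq_one (A : V →ₗ[ℝ] V →ₗ[ℝ] ℝ) (u : V) (c : ℝ)
    (hlow : ∀ X : V, 2 * ⟪u, X⟫_ℝ ^ 2 + 2 * c * (‖X‖ ^ 2 - ⟪u, X⟫_ℝ ^ 2) ≤ A X X)
    {X : V} (hX : ‖X‖ = 1) :
    2 * c + 2 * (1 - c) * ⟪u, X⟫_ℝ ^ 2 ≤ A X X := by
  have := hlow X
  rw [hX] at this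
  linarith

end

theorem stmt12_general {V : Type*} [NormedAddCommGroup V] [InnerProductSpace ℝ V]
    (m : ℕ) (hm : 2 ≤ m)
    (J : V →ₗ[ℝ] V)
    (hJiso : ∀ x y : V, ⟪J x, J y⟫_ℝ = ⟪x, y⟫_ℝ)
    (A : V →ₗ[ℝ] V →ₗ[ℝ] ℝ)
    (u : V) (hu : ‖u‖ = 1) (c : ℝ)
    (hlow : ∀ X : V, 2 * ⟪u, X⟫_ℝ ^ 2 + 2 * c * (‖X‖^2 - ⟪u, X⟫_ℝ ^ 2) ≤ A X X)
    (e : ℕ → V) (ε : ℕ → ℝ)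
    (horth : ∀ i < m, ∀ j < m, ⟪e i, e j⟫_ℝ = if i = j then 1 else 0)
    (horthJ : ∀ i < m, ∀ j < m, ⟪e i, J (e j)⟫_ℝ = 0)
    (hdiag : ∀ i < m, ∀ j < m,
      (A (e i) (e j) + A (J (e i)) (J (e j))) / 2 = if i = j then ε i else 0) :
    (1 ≤ c → 1 + (2 * (m:ℝ) - 3) * c ≤ ∑ i ∈ Finset.range (m - 1), ε i) ∧
    (c < 1 → 2 * ((m:ℝ) - 1) * c ≤ ∑ i ∈ Finset.range (m - 1), ε i) := by
  set s : ℕ → ℝ := fun i => ⟪u, e i⟫_ℝ ^ 2 + ⟪u, J (e i)⟫_ℝ ^ 2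
  have hε : ∀ i < m, 2 * c + (1 - c) * s i ≤ ε i := by
    intro i hi
    have he : ‖e i‖ = 1 := by
      rw [norm_eq_sqrt_real_inner, horth i hi i hi, if_pos rfl, Real.sqrt_one]
    have hJe : ‖J (e i)‖ = 1 := by
      rw [norm_eq_sqrt_real_inner, hJiso, horth i hi i hi, if_pos rfl, Real.sqrt_one]
    have := hdiag i hi i hi
    rw [if_pos rfl] at this
    linarith [two_mul_add_le_apply_self_of_norm_eq_one A u c hlow he,
      two_mul_add_le_apply_self_of_norm_eq_one A u c hlow hJe]
  have hs_le : ∑ i ∈ Finset.range (m - 1), s i ≤ 1 := by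
    have hlt : ∀ i : Fin (m - 1), (i : ℕ) < m := fun i => by omega
    have hon : Orthonormal ℝ fun i : Fin (m - 1) => e i := by
      rw [orthonormal_iff_ite]
      intro i j
      simp [horth i (hlt i) j (hlt j), Fin.val_inj]
    simpa [s, ← Fin.sum_univ_eq_sum_range, hu] using
      sum_inner_sq_add_inner_map_sq_le hon J hJiso (fun i j => horthJ i (hlt i) j (hlt j)) u
  have hs_nonneg : 0 ≤ ∑ i ∈ Finset.range (m - 1), s i :=
    Finset.sum_nonneg fun i _ => by positivity
  have hsum : 2 * ((m : ℝ) - 1) * c + (1 - c) * ∑ i ∈ Finset.range (m - 1), s i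
      ≤ ∑ i ∈ Finset.range (m - 1), ε i := by
    have := Finset.sum_le_sum fun i (hi : i ∈ Finset.range (m - 1)) =>
      hε i (by rw [Finset.mem_range] at hi; omega)
    rw [Finset.sum_add_distrib, Finset.sum_const, Finset.card_range, nsmul_eq_mul,
      ← Finset.mul_sum, Nat.cast_sub (by omega)] at this
    simpa [mul_comm, mul_left_comm, mul_assoc] using this
  constructor
  · intro hc1
    linarith [mul_le_mul_of_nonpos_left hs_le (sub_nonpos.2 hc1)]
  · intro hc1
    linarith [mul_nonneg (sub_nonneg.2 hc1.le) hs_nonneg]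

/-- linear algebra core of Lemma 4.4: Let `A` be a symmetric
bilinear form on a `2m`-dimensional real inner product space with orthogonal
complex structure `J`, bounded below by `2 u♭⊗u♭ + 2c(g - u♭⊗u♭)` for a unit
vector `u` and `c > 0`. If `ε 0 ≤ ⋯ ≤ ε (m-1)` are the Hermitian eigenvalues
of `A` with respect to an adapted unitary frame `{e i, J e i}`, then
`Σ_{i<m-1} ε i ≥ 1 + (2m-3)c` if `c ≥ 1`, and `≥ 2(m-1)c` if `c < 1`. -/
theorem stmt12 {V : Type*} [NormedAddCommGroup V] [InnerProductSpace ℝ V]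
    (m : ℕ) (hm : 2 ≤ m) (hdim : Module.finrank ℝ V = 2 * m)
    (J : V →ₗ[ℝ] V)
    (hJ2 : ∀ x, J (J x) = -x)
    (hJiso : ∀ x y : V, ⟪J x, J y⟫_ℝ = ⟪x, y⟫_ℝ)
    (A : V →ₗ[ℝ] V →ₗ[ℝ] ℝ) (hAsym : ∀ x y, A x y = A y x)
    (u : V) (hu : ‖u‖ = 1) (c : ℝ) (hc : 0 < c)
    (hlow : ∀ X : V, 2 * ⟪u, X⟫_ℝ ^ 2 + 2 * c * (‖X‖^2 - ⟪u, X⟫_ℝ ^ 2) ≤ A X X)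
    (e : ℕ → V) (ε : ℕ → ℝ)
    (horth : ∀ i < m, ∀ j < m, ⟪e i, e j⟫_ℝ = if i = j then 1 else 0)
    (horthJ : ∀ i < m, ∀ j < m, ⟪e i, J (e j)⟫_ℝ = 0)
    (hεmono : ∀ i j, i ≤ j → j < m → ε i ≤ ε j)
    (hdiag : ∀ i < m, ∀ j < m,
      (A (e i) (e j) + A (J (e i)) (J (e j))) / 2 = if i = j then ε i else 0) :
    (1 ≤ c → 1 + (2 * (m:ℝ) - 3) * c ≤ ∑ i ∈ Finset.range (m - 1), ε i) ∧
    (c < 1 → 2 * ((m:ℝ) - 1) * c ≤ ∑ i ∈ Finset.range (m - 1), ε i) :=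
  stmt12_general m hm J hJiso A u hu c hlow e ε horth horthJ hdiag
end

section
/- Let f : M → N be a smooth map between Kähler manifolds and define the 2-tensor Ψ_f = (1/2)[(df∘J) ⊙ (df∘J) − df ⊙ df], where (α ⊙ β)(X,Y) = ⟨α(X), β(Y)⟩. Then for any two (1,0)-vectors Z, W on M, Ψ_f(Z, W̄) = 0; that is, Ψ_f has no (1,1)-component, and consequently S_f^{(1,1)} = S_σ + S_τ, where S_f, S_σ, S_τ are the stress-energy tensors of df, σ, τ respectively. -/
/-!
With `σ = ½(F + J'FJ)` and `τ = ½(F - J'FJ)`, the parallelogram-type identity for inner products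
and the fact that `J'` is an isometry give `⟪σX, σY⟫ + ⟪τX, τY⟫ = ½(⟪FX, FY⟫ + ⟪FJX, FJY⟫)`, the
`J`-average of `⟪FX, FY⟫`. Summing its diagonal over the vectors `eᵢ, Jeᵢ`, which `J` swaps up to
sign, gives `|σ|² + |τ|² = |F|²`, and the two identities together yield `S_f^{(1,1)} = S_σ + S_τ`.
The vanishing of `Ψ^{(1,1)}` is just `J² = -1`.
-/

open scoped InnerProductSpace

section StressEnergy

variable {V W : Type*} [NormedAddCommGroup V] [InnerProductSpace ℝ V]
  [NormedAddCommGroup W] [InnerProductSpace ℝ W]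

theorem inner_add_add_add_inner_sub_sub (a b c d : W) :
    ⟪a + b, c + d⟫_ℝ + ⟪a - b, c - d⟫_ℝ = 2 * (⟪a, c⟫_ℝ + ⟪b, d⟫_ℝ) := by
  simp only [inner_add_left, inner_add_right, inner_sub_left, inner_sub_right]
  ring

variable {J : V →ₗ[ℝ] V} {J' : W →ₗ[ℝ] W} {F : V →ₗ[ℝ] W} {σ τ : V → W}

theorem inner_map_apply_apply_of_sq_eq_neg (hJ2 : ∀ x, J (J x) = -x) (X Y : V) :
    ⟪F (J (J X)), F (J (J Y))⟫_ℝ = ⟪F X, F Y⟫_ℝ := by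
  simp only [hJ2, map_neg, inner_neg_neg]

theorem inner_sigma_add_inner_tau (hJ'iso : ∀ x y : W, ⟪J' x, J' y⟫_ℝ = ⟪x, y⟫_ℝ)
    (hσ : ∀ X, σ X = (1/2 : ℝ) • (F X + J' (F (J X))))
    (hτ : ∀ X, τ X = (1/2 : ℝ) • (F X - J' (F (J X)))) (X Y : V) :
    ⟪σ X, σ Y⟫_ℝ + ⟪τ X, τ Y⟫_ℝ = (1/2) * (⟪F X, F Y⟫_ℝ + ⟪F (J X), F (J Y)⟫_ℝ) := by
  have h := inner_add_add_add_inner_sub_sub (F X) (J' (F (J X))) (F Y) (J' (F (J Y)))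
  rw [hJ'iso] at h
  simp only [hσ, hτ, real_inner_smul_left, real_inner_smul_right]
  linarith

theorem sum_norm_sq_sigma_add_sum_norm_sq_tau {ι : Type*} (s : Finset ι) (e : ι → V)
    (hJ2 : ∀ x, J (J x) = -x) (hJ'iso : ∀ x y : W, ⟪J' x, J' y⟫_ℝ = ⟪x, y⟫_ℝ)
    (hσ : ∀ X, σ X = (1/2 : ℝ) • (F X + J' (F (J X))))
    (hτ : ∀ X, τ X = (1/2 : ℝ) • (F X - J' (F (J X)))) :
    ∑ i ∈ s, (‖σ (e i)‖^2 + ‖σ (J (e i))‖^2) + ∑ i ∈ s, (‖τ (e i)‖^2 + ‖τ (J (e i))‖^2)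
      = ∑ i ∈ s, (‖F (e i)‖^2 + ‖F (J (e i))‖^2) := by
  rw [← Finset.sum_add_distrib]
  refine Finset.sum_congr rfl fun i _ => ?_
  have hx := inner_sigma_add_inner_tau hJ'iso hσ hτ (e i) (e i)
  have hJx := inner_sigma_add_inner_tau hJ'iso hσ hτ (J (e i)) (J (e i))
  rw [inner_map_apply_apply_of_sq_eq_neg hJ2] at hJx
  simp only [real_inner_self_eq_norm_sq] at hx hJx
  linarith

end StressEnergy

theorem stmt18_general {V W : Type*} [NormedAddCommGroup V] [InnerProductSpace ℝ V]
    [NormedAddCommGroup W] [InnerProductSpace ℝ W]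
    (m : ℕ) (J : V →ₗ[ℝ] V) (J' : W →ₗ[ℝ] W)
    (hJ2 : ∀ x, J (J x) = -x)
    (hJiso : ∀ x y : V, ⟪J x, J y⟫_ℝ = ⟪x, y⟫_ℝ)
    (hJ'iso : ∀ x y : W, ⟪J' x, J' y⟫_ℝ = ⟪x, y⟫_ℝ)
    (e : ℕ → V)
    (F : V →ₗ[ℝ] W) (σ τ : V → W)
    (hσ : ∀ X, σ X = (1/2 : ℝ) • (F X + J' (F (J X))))
    (hτ : ∀ X, τ X = (1/2 : ℝ) • (F X - J' (F (J X))))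
    (Ψ : V → V → ℝ)
    (hΨ : ∀ X Y, Ψ X Y = (1/2) * (⟪F (J X), F (J Y)⟫_ℝ - ⟪F X, F Y⟫_ℝ))
    (nF nσ nτ : ℝ)
    (hnF : nF = ∑ i ∈ Finset.range m, (‖F (e i)‖^2 + ‖F (J (e i))‖^2))
    (hnσ : nσ = ∑ i ∈ Finset.range m, (‖σ (e i)‖^2 + ‖σ (J (e i))‖^2))
    (hnτ : nτ = ∑ i ∈ Finset.range m, (‖τ (e i)‖^2 + ‖τ (J (e i))‖^2))
    (Sf Sσ Sτ : V → V → ℝ)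
    (hSf : ∀ X Y, Sf X Y = nF / 2 * ⟪X, Y⟫_ℝ - ⟪F X, F Y⟫_ℝ)
    (hSσ : ∀ X Y, Sσ X Y = nσ / 2 * ⟪X, Y⟫_ℝ - ⟪σ X, σ Y⟫_ℝ)
    (hSτ : ∀ X Y, Sτ X Y = nτ / 2 * ⟪X, Y⟫_ℝ - ⟪τ X, τ Y⟫_ℝ) :
    (∀ X Y, Ψ X Y + Ψ (J X) (J Y) = 0) ∧
    (∀ X Y, (Sf X Y + Sf (J X) (J Y)) / 2 = Sσ X Y + Sτ X Y) := by
  have hn : nσ + nτ = nF := by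
    rw [hnσ, hnτ, hnF]
    exact sum_norm_sq_sigma_add_sum_norm_sq_tau _ e hJ2 hJ'iso hσ hτ
  refine ⟨fun X Y => ?_, fun X Y => ?_⟩
  · rw [hΨ, hΨ, inner_map_apply_apply_of_sq_eq_neg hJ2]
    ring
  · rw [hSf, hSf, hSσ, hSτ, hJiso, ← hn]
    linarith [inner_sigma_add_inner_tau hJ'iso hσ hτ X Y]

/-- computation (2.16)–(2.17), pointwise form: for a linear map
`F = df` between real inner product spaces with orthogonal complex structures,
the tensor `Ψ(X,Y) = (1/2)[⟪F(JX),F(JY)⟫ - ⟪FX,FY⟫]` has vanishing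
(1,1)-component, i.e. `Ψ(X,Y) + Ψ(JX,JY) = 0`, and consequently the
(1,1)-part of the stress-energy tensor `S_f` equals `S_σ + S_τ`, where the
Hilbert–Schmidt norms are computed over the orthonormal frame `{e i, J e i}`. -/
theorem stmt18 {V W : Type*} [NormedAddCommGroup V] [InnerProductSpace ℝ V]
    [NormedAddCommGroup W] [InnerProductSpace ℝ W]
    (m : ℕ) (J : V →ₗ[ℝ] V) (J' : W →ₗ[ℝ] W)
    (hJ2 : ∀ x, J (J x) = -x) (hJ'2 : ∀ w, J' (J' w) = -w)
    (hJiso : ∀ x y : V, ⟪J x, J y⟫_ℝ = ⟪x, y⟫_ℝ)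
    (hJ'iso : ∀ x y : W, ⟪J' x, J' y⟫_ℝ = ⟪x, y⟫_ℝ)
    (e : ℕ → V)
    (horth : ∀ i < m, ∀ j < m, ⟪e i, e j⟫_ℝ = if i = j then 1 else 0)
    (horthJ : ∀ i < m, ∀ j < m, ⟪e i, J (e j)⟫_ℝ = 0)
    (F : V →ₗ[ℝ] W) (σ τ : V → W)
    (hσ : ∀ X, σ X = (1/2 : ℝ) • (F X + J' (F (J X))))
    (hτ : ∀ X, τ X = (1/2 : ℝ) • (F X - J' (F (J X))))
    (Ψ : V → V → ℝ)
    (hΨ : ∀ X Y, Ψ X Y = (1/2) * (⟪F (J X), F (J Y)⟫_ℝ - ⟪F X, F Y⟫_ℝ))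
    (nF nσ nτ : ℝ)
    (hnF : nF = ∑ i ∈ Finset.range m, (‖F (e i)‖^2 + ‖F (J (e i))‖^2))
    (hnσ : nσ = ∑ i ∈ Finset.range m, (‖σ (e i)‖^2 + ‖σ (J (e i))‖^2))
    (hnτ : nτ = ∑ i ∈ Finset.range m, (‖τ (e i)‖^2 + ‖τ (J (e i))‖^2))
    (Sf Sσ Sτ : V → V → ℝ)
    (hSf : ∀ X Y, Sf X Y = nF / 2 * ⟪X, Y⟫_ℝ - ⟪F X, F Y⟫_ℝ)
    (hSσ : ∀ X Y, Sσ X Y = nσ / 2 * ⟪X, Y⟫_ℝ - ⟪σ X, σ Y⟫_ℝ)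
    (hSτ : ∀ X Y, Sτ X Y = nτ / 2 * ⟪X, Y⟫_ℝ - ⟪τ X, τ Y⟫_ℝ) :
    (∀ X Y, Ψ X Y + Ψ (J X) (J Y) = 0) ∧
    (∀ X Y, (Sf X Y + Sf (J X) (J Y)) / 2 = Sσ X Y + Sτ X Y) :=
  stmt18_general m J J' hJ2 hJiso hJ'iso e F σ τ hσ hτ Ψ hΨ nF nσ nτ hnF hnσ hnτ Sf Sσ Sτ hSf hSσ
    hSτ
end
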